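/- There is a surjective group homomorphism from the surface group π_1(F_2) = ⟨x1,y1,x2,y2 | [x1,y1][x2,y2] = 1⟩ to the group G_2 = (Z/2)^4 × Z/2 (with the twisted multiplication) sending x1 ↦ (1,0,0,0,0), y1 ↦ (0,1,0,0,0), x2 ↦ (0,0,1,0,0), y2 ↦ (0,0,0,1,0). -/

import Mathlib

/-- The group `G₂` of order 32: underlying set `(ℤ/2)⁴ × ℤ/2`. -/
@[ext] structure G2 where
  a1 : ZMod 2
  b1 : ZMod 2
  a2 : ZMod 2
  b2 : ZMod 2
  ε : ZMod 2
deriving DecidableEq, Fintype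

namespace G2

/-- The twisted multiplication on `G₂`:
`(a1,b1,a2,b2,ε)·(a1',b1',a2',b2',ε') = (a1+a1',b1+b1',a2+a2',b2+b2',ε+ε'+b1a1'+b2a2')`. -/
def gmul (x y : G2) : G2 :=
  ⟨x.a1 + y.a1, x.b1 + y.b1, x.a2 + y.a2, x.b2 + y.b2,
    x.ε + y.ε + x.b1 * y.a1 + x.b2 * y.a2⟩

def ginv (x : G2) : G2 :=
  ⟨x.a1, x.b1, x.a2, x.b2, x.ε + x.b1 * x.a1 + x.b2 * x.a2⟩

private lemma two_eq_zero (u : ZMod 2) : u + u = 0 := by revert u; decide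

instance : Group G2 where
  mul := gmul
  one := ⟨0, 0, 0, 0, 0⟩
  inv := ginv
  mul_assoc x y z := by
    show gmul (gmul x y) z = gmul x (gmul y z)
    simp only [gmul, mk.injEq]
    refine ⟨by ring, by ring, by ring, by ring, by ring⟩
  one_mul x := by
    show gmul ⟨0, 0, 0, 0, 0⟩ x = x
    ext <;> simp [gmul]
  mul_one x := by
    show gmul x ⟨0, 0, 0, 0, 0⟩ = x
    ext <;> simp [gmul]
  inv_mul_cancel x := by
    show gmul (ginv x) x = ⟨0, 0, 0, 0, 0⟩
    simp only [gmul, ginv, mk.injEq]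
    exact ⟨two_eq_zero _, two_eq_zero _, two_eq_zero _, two_eq_zero _, by
      have h1 := two_eq_zero (x.ε)
      have h2 := two_eq_zero (x.b1 * x.a1)
      have h3 := two_eq_zero (x.b2 * x.a2)
      linear_combination h1 + h2 + h3⟩

@[simp] theorem mul_def (x y : G2) :
    x * y = ⟨x.a1 + y.a1, x.b1 + y.b1, x.a2 + y.a2, x.b2 + y.b2,
      x.ε + y.ε + x.b1 * y.a1 + x.b2 * y.a2⟩ := rfl

@[simp] theorem one_def : (1 : G2) = ⟨0, 0, 0, 0, 0⟩ := rfl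

end G2

open scoped commutatorElement

/-- The surface relator `[x₁,y₁][x₂,y₂]`, where `x₁,y₁,x₂,y₂` are the free generators
indexed by `0,1,2,3`. -/
def surfaceRel : Set (FreeGroup (Fin 4)) :=
  {⁅FreeGroup.of (0 : Fin 4), FreeGroup.of 1⁆ * ⁅FreeGroup.of (2 : Fin 4), FreeGroup.of 3⁆}

/-- The fundamental group of the closed orientable genus-2 surface,
`π₁(F₂) = ⟨x₁,y₁,x₂,y₂ ∣ [x₁,y₁][x₂,y₂] = 1⟩`. -/
abbrev SurfaceGroup2 : Type := PresentedGroup surfaceRel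

/-- The generators `x₁, y₁, x₂, y₂` of `π₁(F₂)`. -/
def sgGen (i : Fin 4) : SurfaceGroup2 := PresentedGroup.of i

/-!
Send the generators to the four basis vectors of `(ℤ/2)⁴`. Both commutators `[x₁,y₁]` and
`[x₂,y₂]` map to the central involution `(0,0,0,0,1)`, so the relator maps to its square, which
is trivial. The images of the generators together with that involution generate `G₂`, since every
element is `x₁^a₁ y₁^b₁ x₂^a₂ y₂^b₂ [x₁,y₁]^ε`.
-/

theorem PresentedGroup.toGroup_surjective {α G : Type*} [Group G] {f : α → G}
    {rels : Set (FreeGroup α)} (h : ∀ r ∈ rels, FreeGroup.lift f r = 1)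
    (hf : Subgroup.closure (Set.range f) = ⊤) : Function.Surjective (toGroup h) := by
  have hlift : toGroup h ∘ mk rels = FreeGroup.lift f := rfl
  exact Function.Surjective.of_comp (g := mk rels)
    (hlift ▸ FreeGroup.lift_surjective_iff_closure_range_eq_top.2 hf)

namespace G2

def gen : Fin 4 → G2 := ![⟨1, 0, 0, 0, 0⟩, ⟨0, 1, 0, 0, 0⟩, ⟨0, 0, 1, 0, 0⟩, ⟨0, 0, 0, 1, 0⟩]

theorem commutatorElement_gen_two_three : ⁅gen 2, gen 3⁆ = ⁅gen 0, gen 1⁆ := by decide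

theorem commutatorElement_gen_zero_one_sq : ⁅gen 0, gen 1⁆ ^ 2 = 1 := by decide

theorem lift_gen_surfaceRel : ∀ r ∈ surfaceRel, FreeGroup.lift gen r = 1 := by
  rintro r rfl
  rw [map_mul, map_commutatorElement, map_commutatorElement]
  simp only [FreeGroup.lift_apply_of]
  rw [commutatorElement_gen_two_three, ← sq, commutatorElement_gen_zero_one_sq]

theorem eq_prod_gen_pow (g : G2) :
    g = gen 0 ^ g.a1.val * gen 1 ^ g.b1.val * gen 2 ^ g.a2.val * gen 3 ^ g.b2.val *
      ⁅gen 0, gen 1⁆ ^ g.ε.val := by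
  revert g
  decide

theorem closure_range_gen : Subgroup.closure (Set.range gen) = ⊤ := by
  refine Subgroup.eq_top_iff' _ |>.2 fun g => ?_
  have mem (i : Fin 4) : gen i ∈ Subgroup.closure (Set.range gen) :=
    Subgroup.subset_closure ⟨i, rfl⟩
  have mem_comm : ⁅gen 0, gen 1⁆ ∈ Subgroup.closure (Set.range gen) := by
    rw [commutatorElement_def]
    exact mul_mem (mul_mem (mul_mem (mem 0) (mem 1)) (inv_mem (mem 0))) (inv_mem (mem 1))
  rw [eq_prod_gen_pow g]
  exact mul_mem (mul_mem (mul_mem (mul_mem (pow_mem (mem 0) _) (pow_mem (mem 1) _))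
    (pow_mem (mem 2) _)) (pow_mem (mem 3) _)) (pow_mem mem_comm _)

end G2

/-- There is a surjective homomorphism `ψ₂ : π₁(F₂) → G₂` with
`x₁ ↦ (1,0,0,0,0)`, `y₁ ↦ (0,1,0,0,0)`, `x₂ ↦ (0,0,1,0,0)`, `y₂ ↦ (0,0,0,1,0)`. -/
theorem exists_surjective_surfaceGroup_to_G2 :
    ∃ ψ : SurfaceGroup2 →* G2, Function.Surjective ψ ∧
      ψ (sgGen 0) = ⟨1, 0, 0, 0, 0⟩ ∧
      ψ (sgGen 1) = ⟨0, 1, 0, 0, 0⟩ ∧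
      ψ (sgGen 2) = ⟨0, 0, 1, 0, 0⟩ ∧
      ψ (sgGen 3) = ⟨0, 0, 0, 1, 0⟩ := by
  have hof (i : Fin 4) : PresentedGroup.toGroup G2.lift_gen_surfaceRel (sgGen i) = G2.gen i :=
    PresentedGroup.toGroup.of _
  exact ⟨PresentedGroup.toGroup G2.lift_gen_surfaceRel,
    PresentedGroup.toGroup_surjective _ G2.closure_range_gen, hof 0, hof 1, hof 2, hof 3⟩
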